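/- The second Adler–Gel'fand–Dickey map P₁(L)·X = L(XL)_+ − (LX)_+ L factorizes through Radul's maps: for every differential operator E of order ≤ n, W_L(E) = P₁(L)·Θ_L(E), where Θ_L(E) = (E L^{-1})_-. -/

import Mathlib

/-!  A self-contained model of the algebra of pseudodifferential operators on the
circle (or over an abstract differential ring `(R, d)`).

A pseudodifferential operator `A = ∑_{i ≤ N} a_i ∂^i` is encoded by the sequence of
its coefficients `A : ℤ → R` (`A i = a_i`, vanishing for large `i`).  The product is
the standard one, determined by the generalized Leibniz rule
`∂^i ∘ b = ∑_{k ≥ 0} C(i,k) b^{(k)} ∂^{i-k}` with generalized binomial coefficients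
`C(i,k) = Ring.choose i k`. -/

noncomputable section

namespace GD

variable {R : Type} [CommRing R]

/-- Pseudodifferential operators encoded by coefficient sequences:
`A : ℤ → R` stands for `∑ i, (A i) ∂^i`. -/
abbrev PDO (R : Type) := ℤ → R

/-- The product of pseudodifferential operators, with respect to the derivation `d`
of the coefficient ring.  (The `finsum` is a finite sum whenever the two factors
have bounded order, which is the case throughout.) -/
def pmul (d : R → R) (A B : PDO R) : PDO R :=
  fun m => ∑ᶠ p : ℤ × ℕ,
    (Ring.choose p.1 p.2 : ℤ) • (A p.1 * d^[p.2] (B (m - p.1 + (p.2 : ℤ))))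

/-- The single-term operator `a ∂^j`. -/
def term (a : R) (j : ℤ) : PDO R := fun m => if m = j then a else 0

/-- The identity operator `1 = ∂^0`. -/
def one : PDO R := term (1 : R) 0

/-- The purely differential part `A₊` of a pseudodifferential operator
(the part with nonnegative powers of `∂`); `A₋ = A - A₊`. -/
def plus (A : PDO R) : PDO R := fun m => if 0 ≤ m then A m else 0

/-- `d` is a derivation of `R`. -/
def IsDeriv (d : R → R) : Prop :=
  (∀ a b, d (a + b) = d a + d b) ∧ ∀ a b, d (a * b) = d a * b + a * d b

end GD

/-! Write `Y = E L⁻¹`, so that `X = Y - Y₊`. Since `L⁻¹ L = 1`, `X L = E - Y₊ L` is a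
differential operator, hence `(X L)₊ = X L`; and `L X = (L E) L⁻¹ - L Y₊` with `L Y₊`
differential, hence `(L X)₊ = (L E L⁻¹)₊ - L Y₊`. Substituting both,
`L (X L)₊ - (L X)₊ L = L E - (L E L⁻¹)₊ L`.

The only non-formal ingredient is associativity of the product of finite-order operators.
At the coefficient of `∂^m`, both bracketings of `A B C` expand, by the Leibniz rule, into
combinations of the monomials `a_i · d^a(b_j) · d^c(c_l)`, `l = m + a + c - i - j`; the two
coefficients agree by the Chu–Vandermonde identity
`C(i, a) C(i + j - a, c) = ∑_{r ≤ c} C(i, a + r) C(a + r, a) C(j, c - r)`. -/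

open Finset in
theorem Ring.choose_mul_choose_add_sub_eq_sum {S : Type*} [CommRing S] [BinomialRing S]
    (x y : S) (a c : ℕ) :
    Ring.choose x a * Ring.choose (x + y - a) c =
      ∑ r ∈ range (c + 1), Ring.choose x (a + r) * (a + r).choose a * Ring.choose y (c - r) := by
  have hsplit (r : ℕ) :
      Ring.choose x (a + r) * (a + r).choose a = Ring.choose x a * Ring.choose (x - a) r := by
    rw [mul_comm, ← nsmul_eq_mul, Ring.choose_smul_choose x (Nat.le_add_right a r),
      Nat.add_sub_cancel_left]
  simp only [hsplit, mul_assoc, ← mul_sum]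
  rw [show x + y - a = (x - a) + y by ring, Ring.add_choose_eq c (Commute.all _ _),
    Nat.sum_antidiagonal_eq_sum_range_succ_mk]

namespace GD

open Finset Function

variable {R : Type} [CommRing R] {d : R → R}

namespace IsDeriv

variable (hd : IsDeriv d)
include hd

lemma map_one : d 1 = 0 := by
  simpa using hd.2 1 1

def iterateHom (k : ℕ) : AddMonoid.End R :=
  (show AddMonoid.End R from AddMonoidHom.mk' d hd.1) ^ k

lemma coe_iterateHom (k : ℕ) : ⇑(hd.iterateHom k) = d^[k] :=
  AddMonoid.End.coe_pow _ _ _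

lemma iterate_map_zero (k : ℕ) : d^[k] 0 = 0 := by
  rw [← hd.coe_iterateHom, map_zero]

lemma iterate_map_sub (k : ℕ) (x y : R) : d^[k] (x - y) = d^[k] x - d^[k] y := by
  simp only [← hd.coe_iterateHom, map_sub]

lemma iterate_map_zsmul (k : ℕ) (z : ℤ) (x : R) : d^[k] (z • x) = z • d^[k] x := by
  simp only [← hd.coe_iterateHom, map_zsmul]

lemma iterate_map_sum (k : ℕ) {ι : Type*} (s : Finset ι) (f : ι → R) :
    d^[k] (∑ i ∈ s, f i) = ∑ i ∈ s, d^[k] (f i) := by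
  simp only [← hd.coe_iterateHom, map_sum]

lemma iterate_map_one {k : ℕ} (hk : k ≠ 0) : d^[k] 1 = 0 := by
  obtain ⟨k, rfl⟩ := Nat.exists_eq_succ_of_ne_zero hk
  rw [iterate_succ_apply, hd.map_one, hd.iterate_map_zero]

lemma iterate_map_mul (n : ℕ) (x y : R) :
    d^[n] (x * y) = ∑ i ∈ range (n + 1), n.choose i • (d^[i] x * d^[n - i] y) := by
  simp only [nsmul_eq_mul]
  induction n with
  | zero => simp
  | succ n ih =>
    have hd_cast (c : ℕ) (z : R) : d (c * z) = c * d z := by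
      rw [← nsmul_eq_mul, ← nsmul_eq_mul, ← iterate_one d, ← hd.coe_iterateHom, map_nsmul]
    rw [sum_choose_succ_mul (fun i j => d^[i] x * d^[j] y), iterate_succ_apply', ih,
      ← iterate_one d, ← hd.coe_iterateHom, map_sum, hd.coe_iterateHom, iterate_one,
      ← sum_add_distrib]
    refine sum_congr rfl fun i hi => ?_
    rw [hd_cast, hd.2, mul_add, add_comm, ← iterate_succ_apply' d, ← iterate_succ_apply' d,
      show (n - i).succ = n + 1 - i by have := mem_range.1 hi; omega]

end IsDeriv

def HasFiniteOrder (A : PDO R) : Prop := BddAbove (support A)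

def IsDifferential (A : PDO R) : Prop := ∀ m : ℤ, m < 0 → A m = 0

lemma hasFiniteOrder_of_forall {A : PDO R} {N : ℤ} (h : ∀ i, N < i → A i = 0) :
    HasFiniteOrder A :=
  ⟨N, fun i hi => le_of_not_gt fun hlt => hi (h i hlt)⟩

lemma sub_sum_term_apply_eq_zero {a : R} {N i : ℤ} (u : ℕ → R) {n : ℕ} (hN : i ≠ N)
    (hn : ∀ j < n, i ≠ j) : (term a N - ∑ j ∈ range n, term (u j) j) i = 0 := by
  have hterm : ∀ j ∈ range n, term (u j) j i = 0 := fun j hj => if_neg (hn j (mem_range.1 hj))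
  rw [Pi.sub_apply, Finset.sum_apply, sum_eq_zero hterm, sub_zero]
  exact if_neg hN

lemma pmul_apply_eq_sum (hd : IsDeriv d) {A B : PDO R} {m : ℤ} {I : Finset ℤ} {K : Finset ℕ}
    (hIK : ∀ i (k : ℕ), A i ≠ 0 → B (m - i + k) ≠ 0 → i ∈ I ∧ k ∈ K) :
    pmul d A B m = ∑ i ∈ I, ∑ k ∈ K, (Ring.choose i k : ℤ) • (A i * d^[k] (B (m - i + k))) := by
  rw [pmul, finsum_eq_sum_of_support_subset (s := I ×ˢ K), sum_product]
  rintro ⟨i, k⟩ hik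
  have hA : A i ≠ 0 := fun h => hik (by simp [h])
  have hB : B (m - i + k) ≠ 0 := fun h => hik (by simp [h, hd.iterate_map_zero])
  exact mem_product.2 (hIK i k hA hB)

lemma pmul_apply_eq_sum_Icc (hd : IsDeriv d) {A B : PDO R} {Na Nb : ℤ}
    (hA : Na ∈ upperBounds (support A)) (hB : Nb ∈ upperBounds (support B)) (m : ℤ) :
    pmul d A B m = ∑ i ∈ Icc (m - Nb) Na, ∑ k ∈ range ((Na + Nb - m).toNat + 1),
      (Ring.choose i k : ℤ) • (A i * d^[k] (B (m - i + k))) := by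
  refine pmul_apply_eq_sum hd fun i k hAi hBk => ?_
  have := hA hAi
  have := hB hBk
  simp only [mem_Icc, mem_range]
  omega

lemma add_mem_upperBounds_support_pmul (hd : IsDeriv d) {A B : PDO R} {Na Nb : ℤ}
    (hA : Na ∈ upperBounds (support A)) (hB : Nb ∈ upperBounds (support B)) :
    Na + Nb ∈ upperBounds (support (pmul d A B)) :=
  fun m hm => le_of_not_gt fun hlt => hm <| by
    rw [pmul_apply_eq_sum_Icc hd hA hB, Icc_eq_empty (by omega), sum_empty]

lemma HasFiniteOrder.pmul (hd : IsDeriv d) {A B : PDO R} (hA : HasFiniteOrder A)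
    (hB : HasFiniteOrder B) : HasFiniteOrder (pmul d A B) :=
  let ⟨_, hNa⟩ := hA
  let ⟨_, hNb⟩ := hB
  ⟨_, add_mem_upperBounds_support_pmul hd hNa hNb⟩

lemma HasFiniteOrder.plus {A : PDO R} (hA : HasFiniteOrder A) : HasFiniteOrder (plus A) :=
  hA.mono fun m (hm : GD.plus A m ≠ 0) (hAm : A m = 0) => hm (by simp [GD.plus, hAm])

lemma pmul_sub_left (hd : IsDeriv d) {A A' B : PDO R} (hA : HasFiniteOrder A)
    (hA' : HasFiniteOrder A') (hB : HasFiniteOrder B) :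
    pmul d (A - A') B = pmul d A B - pmul d A' B := by
  obtain ⟨N, hN⟩ := hA.union hA'
  obtain ⟨Nb, hNb⟩ := hB
  have hN' : N ∈ upperBounds (support (A - A')) := upperBounds_mono_set (support_sub A A') hN
  funext m
  rw [Pi.sub_apply, pmul_apply_eq_sum_Icc hd hN' hNb,
    pmul_apply_eq_sum_Icc hd (upperBounds_mono_set Set.subset_union_left hN) hNb,
    pmul_apply_eq_sum_Icc hd (upperBounds_mono_set Set.subset_union_right hN) hNb]
  simp only [← sum_sub_distrib, Pi.sub_apply, sub_mul, smul_sub]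

lemma pmul_sub_right (hd : IsDeriv d) {A B B' : PDO R} (hA : HasFiniteOrder A)
    (hB : HasFiniteOrder B) (hB' : HasFiniteOrder B') :
    pmul d A (B - B') = pmul d A B - pmul d A B' := by
  obtain ⟨Na, hNa⟩ := hA
  obtain ⟨N, hN⟩ := hB.union hB'
  have hN' : N ∈ upperBounds (support (B - B')) := upperBounds_mono_set (support_sub B B') hN
  funext m
  rw [Pi.sub_apply, pmul_apply_eq_sum_Icc hd hNa hN',
    pmul_apply_eq_sum_Icc hd hNa (upperBounds_mono_set Set.subset_union_left hN),
    pmul_apply_eq_sum_Icc hd hNa (upperBounds_mono_set Set.subset_union_right hN)]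
  simp only [← sum_sub_distrib, Pi.sub_apply, hd.iterate_map_sub, mul_sub, smul_sub]

lemma pmul_one (hd : IsDeriv d) (A : PDO R) : pmul d A one = A := by
  funext m
  rw [pmul, finsum_eq_single _ (m, 0)]
  · simp [one, term]
  rintro ⟨i, k⟩ hik
  by_cases hv : m - i + k = 0
  · have hk : k ≠ 0 := by
      rintro rfl
      exact hik (by rw [show i = m by omega])
    simp [one, term, hv, hd.iterate_map_one hk]
  · simp [one, term, hv, hd.iterate_map_zero]

lemma plus_sub (A B : PDO R) : plus (A - B) = plus A - plus B := by
  funext m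
  by_cases hm : 0 ≤ m <;> simp [plus, hm]

lemma isDifferential_plus (A : PDO R) : IsDifferential (plus A) :=
  fun _ hm => if_neg hm.not_ge

lemma IsDifferential.plus_eq {A : PDO R} (hA : IsDifferential A) : plus A = A := by
  funext m
  by_cases hm : 0 ≤ m
  · exact if_pos hm
  · rw [plus, if_neg hm, hA m (not_le.1 hm)]

lemma IsDifferential.sub {A B : PDO R} (hA : IsDifferential A) (hB : IsDifferential B) :
    IsDifferential (A - B) :=
  fun m hm => by rw [Pi.sub_apply, hA m hm, hB m hm, sub_zero]

lemma IsDifferential.pmul (hd : IsDeriv d) {A B : PDO R} (hA : IsDifferential A)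
    (hB : IsDifferential B) : IsDifferential (pmul d A B) := by
  intro m hm
  refine finsum_eq_zero_of_forall_eq_zero fun ⟨i, k⟩ => ?_
  rcases lt_or_ge i 0 with hi | hi
  · simp [hA i hi]
  rcases lt_or_ge i k with hik | hik
  · lift i to ℕ using hi
    simp [Ring.choose_natCast, Nat.choose_eq_zero_of_lt (by exact_mod_cast hik : i < k)]
  · simp [hB (m - i + k) (by omega), hd.iterate_map_zero]

section Assoc

variable {A B C : PDO R} {Na Nb Nc m : ℤ} {T : ℕ}

def tripleTerm (d : R → R) (A B C : PDO R) (m i j : ℤ) (a c : ℕ) : R :=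
  A i * d^[a] (B j) * d^[c] (C (m + a + c - i - j))

lemma bounds_of_tripleTerm_ne_zero (hd : IsDeriv d) (hA : Na ∈ upperBounds (support A))
    (hB : Nb ∈ upperBounds (support B)) (hC : Nc ∈ upperBounds (support C)) {i j : ℤ} {a c : ℕ}
    (h : tripleTerm d A B C m i j a c ≠ 0) : i ≤ Na ∧ j ≤ Nb ∧ m + a + c - i - j ≤ Nc :=
  ⟨hA fun h0 => h (by simp [tripleTerm, h0]),
    hB fun h0 => h (by simp [tripleTerm, h0, hd.iterate_map_zero]),
    hC fun h0 => h (by simp [tripleTerm, h0, hd.iterate_map_zero])⟩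

lemma pmul_pmul_left_apply_expand (hd : IsDeriv d) (hA : Na ∈ upperBounds (support A))
    (hB : Nb ∈ upperBounds (support B)) (hC : Nc ∈ upperBounds (support C))
    (hT : Na + Nb + Nc - m < T) :
    pmul d (pmul d A B) C m =
      ∑ p ∈ Icc (m - Nc) (Na + Nb), ∑ c ∈ range T, ∑ i ∈ Icc (m - Nb - Nc) Na, ∑ a ∈ range T,
        (Ring.choose p c * Ring.choose i a) • tripleTerm d A B C m i (p - i + a) a c := by
  have hAB := add_mem_upperBounds_support_pmul hd hA hB
  rw [pmul_apply_eq_sum hd (I := Icc (m - Nc) (Na + Nb)) (K := range T) fun p c h₁ h₂ => by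
    have := hAB h₁; have := hC h₂; simp only [mem_Icc, mem_range]; omega]
  refine sum_congr rfl fun p hp => sum_congr rfl fun c _ => ?_
  rw [pmul_apply_eq_sum hd (I := Icc (m - Nb - Nc) Na) (K := range T) fun i a h₁ h₂ => by
    have := hA h₁; have := hB h₂; simp only [mem_Icc, mem_range] at hp ⊢; omega]
  simp only [sum_mul, smul_sum, smul_mul_assoc, smul_smul, tripleTerm]
  refine sum_congr rfl fun i _ => sum_congr rfl fun a _ => ?_
  rw [show m + a + c - i - (p - i + a) = m - p + c by ring]

lemma pmul_pmul_left_apply_eq_sum (hd : IsDeriv d) (hA : Na ∈ upperBounds (support A))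
    (hB : Nb ∈ upperBounds (support B)) (hC : Nc ∈ upperBounds (support C))
    (hT : Na + Nb + Nc - m < T) :
    pmul d (pmul d A B) C m =
      ∑ i ∈ Icc (m - Nb - Nc) Na, ∑ j ∈ Icc (m - Na - Nc) Nb, ∑ a ∈ range T, ∑ c ∈ range T,
        (Ring.choose i a * Ring.choose (i + j - a) c) • tripleTerm d A B C m i j a c := by
  rw [pmul_pmul_left_apply_expand hd hA hB hC hT]
  set f : ℤ × ℕ × ℤ × ℕ → R := fun ⟨p, c, i, a⟩ =>
    (Ring.choose p c * Ring.choose i a) • tripleTerm d A B C m i (p - i + a) a c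
  set g : ℤ × ℤ × ℕ × ℕ → R := fun ⟨i, j, a, c⟩ =>
    (Ring.choose i a * Ring.choose (i + j - a) c) • tripleTerm d A B C m i j a c
  have hfg : ∀ p c i a, f (p, c, i, a) = g (i, p - i + a, a, c) := fun p c i a => by
    simp only [f, g, mul_comm (Ring.choose p c), show i + (p - i + a) - a = p by ring]
  have hbd : ∀ i j a c, g (i, j, a, c) ≠ 0 → i ≤ Na ∧ j ≤ Nb ∧ m + a + c - i - j ≤ Nc :=
    fun i j a c hx => bounds_of_tripleTerm_ne_zero hd hA hB hC (right_ne_zero_of_smul hx)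
  suffices ∑ x ∈ Icc (m - Nc) (Na + Nb) ×ˢ range T ×ˢ Icc (m - Nb - Nc) Na ×ˢ range T, f x =
      ∑ y ∈ Icc (m - Nb - Nc) Na ×ˢ Icc (m - Na - Nc) Nb ×ˢ range T ×ˢ range T, g y by
    simpa only [sum_product] using this
  -- the index `p` of `A B` is traded for the index `j = p - i + a` of `B`
  refine sum_bij_ne_zero (fun x _ _ => (x.2.2.1, x.1 - x.2.2.1 + x.2.2.2, x.2.2.2, x.2.1))
    ?_ ?_ ?_ ?_
  · rintro ⟨p, c, i, a⟩ hx hfx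
    rw [hfg] at hfx
    have := hbd _ _ _ _ hfx
    simp only [mem_product, mem_Icc, mem_range] at hx ⊢
    omega
  · rintro ⟨p, c, i, a⟩ - - ⟨p', c', i', a'⟩ - - h
    simp only [Prod.mk.injEq] at h ⊢
    omega
  · rintro ⟨i, j, a, c⟩ hy hgy
    have := hbd _ _ _ _ hgy
    have hpre := hfg (i + j - a) c i a
    rw [show i + j - a - i + a = j by ring] at hpre
    refine ⟨(i + j - a, c, i, a), ?_, hpre ▸ hgy, ?_⟩
    · simp only [mem_product, mem_Icc, mem_range] at hy ⊢
      omega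
    · simp only [Prod.mk.injEq, true_and, and_true]
      ring
  · rintro ⟨p, c, i, a⟩ - -
    exact hfg p c i a

lemma pmul_pmul_right_apply_expand (hd : IsDeriv d) (hA : Na ∈ upperBounds (support A))
    (hB : Nb ∈ upperBounds (support B)) (hC : Nc ∈ upperBounds (support C))
    (hT : Na + Nb + Nc - m < T) :
    pmul d A (pmul d B C) m =
      ∑ i ∈ Icc (m - Nb - Nc) Na, ∑ k ∈ range T, ∑ j ∈ Icc (m - Na - Nc) Nb, ∑ l ∈ range T,
        ∑ a ∈ range T, (Ring.choose i k * Ring.choose j l * (k.choose a : ℤ)) •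
          (A i * d^[a] (B j) * d^[k - a + l] (C (m - i + k - j + l))) := by
  have hBC := add_mem_upperBounds_support_pmul hd hB hC
  rw [pmul_apply_eq_sum hd (I := Icc (m - Nb - Nc) Na) (K := range T) fun i k h₁ h₂ => by
    have := hA h₁; have := hBC h₂; simp only [mem_Icc, mem_range]; omega]
  refine sum_congr rfl fun i hi => sum_congr rfl fun k hk => ?_
  rw [pmul_apply_eq_sum hd (I := Icc (m - Na - Nc) Nb) (K := range T) fun j l h₁ h₂ => by
    have := hB h₁; have := hC h₂; simp only [mem_Icc, mem_range] at hi ⊢; omega]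
  simp only [hd.iterate_map_sum, hd.iterate_map_zsmul, mul_sum, smul_sum]
  refine sum_congr rfl fun j _ => sum_congr rfl fun l _ => ?_
  have hk' : k + 1 ≤ T := mem_range.1 hk
  rw [hd.iterate_map_mul, sum_subset (range_subset_range.2 hk') fun a _ ha => by
    rw [Nat.choose_eq_zero_of_lt (by simp only [mem_range] at ha; omega), zero_smul]]
  simp only [mul_sum, smul_sum]
  refine sum_congr rfl fun a _ => ?_
  rw [← natCast_zsmul, mul_smul_comm, mul_smul_comm, smul_smul, smul_smul, ← mul_assoc,
    ← iterate_add_apply]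

lemma tripleTerm_eq_of_le {i j : ℤ} {k a : ℕ} (l : ℕ) (hak : a ≤ k) :
    A i * d^[a] (B j) * d^[k - a + l] (C (m - i + k - j + l)) =
      tripleTerm d A B C m i j a (k - a + l) := by
  obtain ⟨r, rfl⟩ := Nat.exists_eq_add_of_le hak
  rw [tripleTerm, Nat.add_sub_cancel_left,
    show m + a + (r + l : ℕ) - i - j = m - i + (a + r : ℕ) - j + l by push_cast; ring]

lemma pmul_pmul_right_apply_eq_sum (hd : IsDeriv d) (hA : Na ∈ upperBounds (support A))
    (hB : Nb ∈ upperBounds (support B)) (hC : Nc ∈ upperBounds (support C))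
    (hT : Na + Nb + Nc - m < T) :
    pmul d A (pmul d B C) m =
      ∑ i ∈ Icc (m - Nb - Nc) Na, ∑ j ∈ Icc (m - Na - Nc) Nb, ∑ a ∈ range T, ∑ c ∈ range T,
        ∑ r ∈ range (c + 1), (Ring.choose i (a + r) * ((a + r).choose a : ℤ) *
          Ring.choose j (c - r)) • tripleTerm d A B C m i j a c := by
  rw [pmul_pmul_right_apply_expand hd hA hB hC hT]
  set f : ℤ × ℕ × ℤ × ℕ × ℕ → R := fun ⟨i, k, j, l, a⟩ =>
    (Ring.choose i k * Ring.choose j l * (k.choose a : ℤ)) •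
      (A i * d^[a] (B j) * d^[k - a + l] (C (m - i + k - j + l)))
  set g : (_ : ℤ × ℤ × ℕ × ℕ) × ℕ → R := fun ⟨⟨i, j, a, c⟩, r⟩ =>
    (Ring.choose i (a + r) * ((a + r).choose a : ℤ) * Ring.choose j (c - r)) •
      tripleTerm d A B C m i j a c
  have hle : ∀ i k j l a, f (i, k, j, l, a) ≠ 0 → a ≤ k := fun i k j l a hf => by
    by_contra hlt
    exact hf (by simp [f, Nat.choose_eq_zero_of_lt (not_le.1 hlt)])
  have hfg : ∀ i k j l a, a ≤ k → f (i, k, j, l, a) = g ⟨(i, j, a, k - a + l), k - a⟩ :=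
    fun i k j l a hak => by
      simp only [f, g, tripleTerm_eq_of_le l hak, Nat.add_sub_cancel' hak,
        Nat.add_sub_cancel_left]
      ring
  have hbd : ∀ i j a c r, g ⟨(i, j, a, c), r⟩ ≠ 0 →
      i ≤ Na ∧ j ≤ Nb ∧ m + a + c - i - j ≤ Nc :=
    fun i j a c r hx => bounds_of_tripleTerm_ne_zero hd hA hB hC (right_ne_zero_of_smul hx)
  suffices ∑ x ∈ Icc (m - Nb - Nc) Na ×ˢ range T ×ˢ Icc (m - Na - Nc) Nb ×ˢ range T ×ˢ range T,
      f x = ∑ y ∈ (Icc (m - Nb - Nc) Na ×ˢ Icc (m - Na - Nc) Nb ×ˢ range T ×ˢ range T).sigma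
        (fun x => range (x.2.2.2 + 1)), g y by
    simpa only [sum_product, sum_sigma] using this
  -- `(i, k, j, l, a) ↦ ((i, j, a, c), r)` with `r = k - a` and `c = r + l`
  refine sum_bij_ne_zero
    (fun x _ _ => ⟨(x.1, x.2.2.1, x.2.2.2.2, x.2.1 - x.2.2.2.2 + x.2.2.2.1), x.2.1 - x.2.2.2.2⟩)
    ?_ ?_ ?_ ?_
  · rintro ⟨i, k, j, l, a⟩ hx hfx
    have hak := hle _ _ _ _ _ hfx
    rw [hfg _ _ _ _ _ hak] at hfx
    have := hbd _ _ _ _ _ hfx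
    simp only [mem_sigma, mem_product, mem_Icc, mem_range] at hx ⊢
    omega
  · rintro ⟨i, k, j, l, a⟩ - hfx ⟨i', k', j', l', a'⟩ - hfx' h
    have := hle _ _ _ _ _ hfx
    have := hle _ _ _ _ _ hfx'
    simp only [Sigma.mk.injEq, Prod.mk.injEq, heq_eq_eq] at h ⊢
    omega
  · rintro ⟨⟨i, j, a, c⟩, r⟩ hy hgy
    simp only [mem_sigma, mem_product, mem_Icc, mem_range] at hy
    have := hbd _ _ _ _ _ hgy
    have hpre := hfg i (a + r) j (c - r) a (Nat.le_add_right a r)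
    rw [show a + r - a + (c - r) = c by omega, show a + r - a = r by omega] at hpre
    refine ⟨(i, a + r, j, c - r, a), ?_, hpre ▸ hgy, ?_⟩
    · simp only [mem_product, mem_Icc, mem_range]
      omega
    · simp only [Sigma.mk.injEq, Prod.mk.injEq, heq_eq_eq, true_and]
      omega
  · rintro ⟨i, k, j, l, a⟩ - hfx
    exact hfg _ _ _ _ _ (hle _ _ _ _ _ hfx)

theorem pmul_assoc (hd : IsDeriv d) (hA : HasFiniteOrder A) (hB : HasFiniteOrder B)
    (hC : HasFiniteOrder C) : pmul d (pmul d A B) C = pmul d A (pmul d B C) := by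
  obtain ⟨Na, hNa⟩ := hA
  obtain ⟨Nb, hNb⟩ := hB
  obtain ⟨Nc, hNc⟩ := hC
  funext m
  obtain ⟨T, hT⟩ : ∃ T : ℕ, Na + Nb + Nc - m < T := ⟨(Na + Nb + Nc - m).toNat + 1, by omega⟩
  rw [pmul_pmul_left_apply_eq_sum hd hNa hNb hNc hT, pmul_pmul_right_apply_eq_sum hd hNa hNb hNc hT]
  refine sum_congr rfl fun i _ => sum_congr rfl fun j _ => sum_congr rfl fun a _ =>
    sum_congr rfl fun c _ => ?_
  rw [← sum_smul, Ring.choose_mul_choose_add_sub_eq_sum]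

end Assoc

end GD

open GD in
theorem radul_factorization_general {R : Type} [CommRing R] (d : R → R) (hd : GD.IsDeriv d)
    (n : ℕ) (u : ℕ → R)
    (L : PDO R)
    (hL : L = term 1 ((n : ℤ) + 1) - ∑ j ∈ Finset.range n, term (u j) (j : ℤ))
    (Linv : PDO R)
    (hinv2 : pmul d Linv L = GD.one)
    (hord : ∀ i : ℤ, -((n : ℤ) + 1) < i → Linv i = 0)
    (E : PDO R)
    (hEdiff : ∀ m : ℤ, m < 0 → E m = 0)
    (hEord : ∀ m : ℤ, (n : ℤ) < m → E m = 0)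
    (X : PDO R)
    (hX : X = pmul d E Linv - GD.plus (pmul d E Linv)) :
    pmul d L E - pmul d (GD.plus (pmul d (pmul d L E) Linv)) L
      = pmul d L (GD.plus (pmul d X L)) - pmul d (GD.plus (pmul d L X)) L := by
  have hLord : HasFiniteOrder L := hasFiniteOrder_of_forall (N := n + 1) fun i hi => by
    rw [hL]; exact sub_sum_term_apply_eq_zero u (by omega) fun j hj => by omega
  have hLdiff : IsDifferential L := fun i hi => by
    rw [hL]; exact sub_sum_term_apply_eq_zero u (by omega) fun j _ => by omega
  have hLinv : HasFiniteOrder Linv := hasFiniteOrder_of_forall hord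
  have hE : HasFiniteOrder E := hasFiniteOrder_of_forall hEord
  set Y := pmul d E Linv
  have hY : HasFiniteOrder Y := hE.pmul hd hLinv
  have hXL : pmul d X L = E - pmul d (plus Y) L := by
    rw [hX, pmul_sub_left hd hY hY.plus hLord, pmul_assoc hd hE hLinv hLord, hinv2, pmul_one hd]
  have hXL_diff : IsDifferential (pmul d X L) :=
    hXL ▸ IsDifferential.sub hEdiff ((isDifferential_plus Y).pmul hd hLdiff)
  have hLX : plus (pmul d L X) = plus (pmul d (pmul d L E) Linv) - pmul d L (plus Y) := by
    rw [hX, pmul_sub_right hd hLord hY hY.plus, plus_sub, ← pmul_assoc hd hLord hE hLinv,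
      (hLdiff.pmul hd (isDifferential_plus Y)).plus_eq]
  rw [hXL_diff.plus_eq, hXL, hLX, pmul_sub_right hd hLord hE (hY.plus.pmul hd hLord),
    pmul_sub_left hd ((hLord.pmul hd hE).pmul hd hLinv).plus (hLord.pmul hd hY.plus) hLord,
    pmul_assoc hd hLord hY.plus hLord]
  abel

open GD in
/-- the factorization `W_L = P₁(L) ∘ Θ_L` of Radul's map through the
second Adler–Gel'fand–Dickey Poisson tensor: for every differential operator `E` of
order ≤ n, with `X = Θ_L(E) = (EL^{-1})₋`,
`W_L(E) = LE - (LEL^{-1})₊L = L(XL)₊ - (LX)₊L = P₁(L)·X`. -/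
theorem radul_factorization {R : Type} [CommRing R] (d : R → R) (hd : GD.IsDeriv d)
    (n : ℕ) (hn : 0 < n) (u : ℕ → R)
    (L : PDO R)
    (hL : L = term 1 ((n : ℤ) + 1) - ∑ j ∈ Finset.range n, term (u j) (j : ℤ))
    (Linv : PDO R)
    (hinv1 : pmul d L Linv = GD.one) (hinv2 : pmul d Linv L = GD.one)
    (hord : ∀ i : ℤ, -((n : ℤ) + 1) < i → Linv i = 0)
    (E : PDO R)
    (hEdiff : ∀ m : ℤ, m < 0 → E m = 0)
    (hEord : ∀ m : ℤ, (n : ℤ) < m → E m = 0)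
    (X : PDO R)
    (hX : X = pmul d E Linv - GD.plus (pmul d E Linv)) :
    pmul d L E - pmul d (GD.plus (pmul d (pmul d L E) Linv)) L
      = pmul d L (GD.plus (pmul d X L)) - pmul d (GD.plus (pmul d L X)) L :=
  radul_factorization_general d hd n u L hL Linv hinv2 hord E hEdiff hEord X hX
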